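/- (Regularized inverse with derivative bounds.) Let n ≥ 1, k ∈ ℕ, γ ∈ (0,1], ρ > 0 and M ≥ ρ. Let χ : ℝ → [0,1] be a cut-off function (C^∞, even, χ(y) = 0 for |y| ≤ 1/3, χ(y) = 1 for |y| ≥ 2/3). Define h_ρ : ℝ → ℝ by h_ρ(y) := χ(y/ρ)/y for y ≠ 0 and h_ρ(0) := 0. Then: (i) h_ρ is C^∞ on ℝ, h_ρ(y) = 1/y for all |y| ≥ 2ρ/3, and |h_ρ(y)| ≤ 3/ρ for all y ∈ ℝ. (ii) If f : ℝ^n → ℝ is of class C^{k+1} and satisfies γ^{|α|}·|∂^α f(λ)| ≤ M for all λ ∈ ℝ^n and all multi-indices α with 1 ≤ |α| ≤ k+1, then g := h_ρ ∘ f is of class C^{k+1}, g(λ) = 1/f(λ) for every λ with |f(λ)| ≥ ρ, and there exists a constant C_k > 0, depending only on k, n and χ, such that γ^{|α|}·|∂^α g(λ)| ≤ C_k · M^{k+1}/ρ^{k+2} for all λ ∈ ℝ^n and all multi-indices α with 0 ≤ |α| ≤ k+1. -/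

import Mathlib

/-- A cut-off function: C^∞, even, valued in [0,1], vanishing for |y| ≤ 1/3 and
equal to 1 for |y| ≥ 2/3. -/
def IsCutoff (χ : ℝ → ℝ) : Prop :=
  (∀ m : ℕ, ContDiff ℝ m χ) ∧ (∀ y : ℝ, χ (-y) = χ y) ∧
  (∀ y : ℝ, χ y ∈ Set.Icc (0 : ℝ) 1) ∧
  (∀ y : ℝ, |y| ≤ 1 / 3 → χ y = 0) ∧ (∀ y : ℝ, 2 / 3 ≤ |y| → χ y = 1)

/-- The regularized inverse h_ρ(y) = χ(y/ρ)/y, with h_ρ(0) = 0. -/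
noncomputable def hcut (χ : ℝ → ℝ) (ρ : ℝ) (y : ℝ) : ℝ :=
  if y = 0 then 0 else χ (y / ρ) / y

/-- Partial derivative in the i-th coordinate direction of a function on ℝ^n. -/
noncomputable def pderiv' {n : ℕ} (i : Fin n) (f : (Fin n → ℝ) → ℝ) : (Fin n → ℝ) → ℝ :=
  fun x => fderiv ℝ f x (Pi.single i 1)

/-- Multi-index partial derivative ∂^α on ℝ^n. -/
noncomputable def multiDeriv {n : ℕ} (α : Fin n → ℕ) (f : (Fin n → ℝ) → ℝ) :
    (Fin n → ℝ) → ℝ :=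
  (List.finRange n).foldr (fun i g => (pderiv' i)^[α i] g) f

/-! The rescaling `h_ρ(y) = ρ⁻¹ h_1(y/ρ)` reduces the derivative bounds for `h_ρ` to those of the
single function `h_1`, which vanishes near `0` and equals `1/y` for `|y| ≥ 2/3`, so that its
derivatives of order `j` are bounded; hence `|h_ρ^{(j)}| ≤ B / ρ^{j+1}`. Writing
`h_ρ ∘ f = h_ρ(M ·) ∘ (f / M)`, Faà di Bruno's bound `norm_iteratedFDeriv_comp_le` applies with
`‖D^j (f / M)‖ ≤ (n / γ)^j`: the `j`-th derivative of `f` is controlled by its values on tuples of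
basis vectors, and by symmetry of second derivatives each of these is a partial derivative
`∂^α f` with `|α| = j`. -/

open Topology

variable {χ : ℝ → ℝ}

lemma hcut_eq_mul_inv (ρ : ℝ) : hcut χ ρ = fun y => χ (y / ρ) * y⁻¹ := by
  funext y
  by_cases hy : y = 0 <;> simp [hcut, hy, div_eq_mul_inv]

lemma hcut_eq_one_div (hχ : IsCutoff χ) {ρ y : ℝ} (hρ : 0 < ρ) (hy : 2 * ρ / 3 ≤ |y|) :
    hcut χ ρ y = 1 / y := by
  have hy0 : y ≠ 0 := by
    rintro rfl
    simp only [abs_zero] at hy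
    linarith
  have hyρ : 2 / 3 ≤ |y / ρ| := by
    rw [abs_div, abs_of_pos hρ, le_div_iff₀ hρ]
    linarith
  rw [hcut, if_neg hy0, hχ.2.2.2.2 _ hyρ]

lemma hcut_eq_zero (hχ : IsCutoff χ) {ρ y : ℝ} (hρ : 0 < ρ) (hy : |y| ≤ ρ / 3) :
    hcut χ ρ y = 0 := by
  have hyρ : |y / ρ| ≤ 1 / 3 := by
    rw [abs_div, abs_of_pos hρ, div_le_iff₀ hρ]
    linarith
  simp [hcut_eq_mul_inv, hχ.2.2.2.1 _ hyρ]

lemma hcut_contDiff (hχ : IsCutoff χ) {ρ : ℝ} (hρ : 0 < ρ) (m : ℕ) :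
    ContDiff ℝ m (hcut χ ρ) := by
  refine contDiff_iff_contDiffAt.2 fun y => ?_
  rcases eq_or_ne y 0 with rfl | hy
  · have hzero : hcut χ ρ =ᶠ[𝓝 0] fun _ => 0 := by
      filter_upwards [Metric.closedBall_mem_nhds (0 : ℝ) (by positivity : 0 < ρ / 3)] with z hz
      exact hcut_eq_zero hχ hρ (by simpa using hz)
    exact contDiffAt_const.congr_of_eventuallyEq hzero
  · rw [hcut_eq_mul_inv]
    exact ((hχ.1 m).comp (contDiff_id.div_const ρ)).contDiffAt.mul (contDiffAt_inv ℝ hy)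

lemma abs_hcut_le (hχ : IsCutoff χ) {ρ : ℝ} (hρ : 0 < ρ) (y : ℝ) : |hcut χ ρ y| ≤ 3 / ρ := by
  rcases le_or_gt |y| (ρ / 3) with hy | hy
  · rw [hcut_eq_zero hχ hρ hy, abs_zero]
    positivity
  have hy0 : 0 < |y| := by linarith [show 0 < ρ / 3 by positivity]
  have hχ1 : |χ (y / ρ)| ≤ 1 := abs_le.2 ⟨by linarith [(hχ.2.2.1 (y / ρ)).1], (hχ.2.2.1 _).2⟩
  calc |hcut χ ρ y| = |χ (y / ρ)| / |y| := by simp [hcut_eq_mul_inv, abs_mul, div_eq_mul_inv]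
    _ ≤ 1 / |y| := by gcongr
    _ ≤ 3 / ρ := by rw [div_le_div_iff₀ hy0 hρ]; linarith

lemma hcut_eq_inv_mul_hcut_one {ρ : ℝ} (hρ : ρ ≠ 0) :
    hcut χ ρ = fun y => ρ⁻¹ * hcut χ 1 (ρ⁻¹ * y) := by
  funext y
  rcases eq_or_ne y 0 with rfl | hy
  · simp [hcut]
  simp only [hcut_eq_mul_inv, div_one]
  field_simp

lemma exists_abs_iteratedDeriv_hcut_one_le (hχ : IsCutoff χ) (j : ℕ) :
    ∃ B, ∀ y, |iteratedDeriv j (hcut χ 1) y| ≤ B := by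
  have hcont : Continuous (iteratedDeriv j (hcut χ 1)) :=
    (hcut_contDiff hχ one_pos j).continuous_iteratedDeriv j le_rfl
  obtain ⟨B, hB⟩ := (isCompact_Icc (a := (-1 : ℝ)) (b := 1)).exists_bound_of_continuousOn
    hcont.continuousOn
  refine ⟨max B j.factorial, fun y => ?_⟩
  rcases le_or_gt |y| 1 with hy | hy
  · exact (hB y (abs_le.1 hy)).trans (le_max_left _ _)
  have hinv : hcut χ 1 =ᶠ[𝓝 y] fun z => z⁻¹ := by
    filter_upwards [(isOpen_lt continuous_const continuous_abs).mem_nhds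
      (show (2 / 3 : ℝ) < |y| by linarith)] with z (hz : 2 / 3 < |z|)
    rw [hcut_eq_one_div hχ one_pos (by linarith), one_div]
  rw [hinv.iteratedDeriv_eq, iteratedDeriv_eq_iterate, iter_deriv_inv]
  have hpow : |y ^ (-1 - j : ℤ)| ≤ 1 := by
    rw [show (-1 - j : ℤ) = -((j + 1 : ℕ) : ℤ) by push_cast; ring, zpow_neg, zpow_natCast,
      abs_inv, abs_pow]
    exact inv_le_one_of_one_le₀ (one_le_pow₀ hy.le)
  calc |(-1) ^ j * (j.factorial : ℝ) * y ^ (-1 - j : ℤ)| = j.factorial * |y ^ (-1 - j : ℤ)| := by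
        simp [abs_mul]
    _ ≤ j.factorial := mul_le_of_le_one_right (by positivity) hpow
    _ ≤ max B j.factorial := le_max_right _ _

lemma exists_abs_iteratedDeriv_hcut_le (hχ : IsCutoff χ) (N : ℕ) :
    ∃ B, 0 < B ∧ ∀ j ≤ N, ∀ ρ, 0 < ρ → ∀ y, |iteratedDeriv j (hcut χ ρ) y| ≤ B / ρ ^ (j + 1) := by
  choose B hB using exists_abs_iteratedDeriv_hcut_one_le hχ
  refine ⟨∑ j ∈ Finset.range (N + 1), |B j| + 1, by positivity, fun j hj ρ hρ y => ?_⟩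
  have hBj : B j ≤ ∑ j ∈ Finset.range (N + 1), |B j| + 1 :=
    calc B j ≤ |B j| := le_abs_self _
      _ ≤ ∑ j ∈ Finset.range (N + 1), |B j| :=
        Finset.single_le_sum (f := fun j => |B j|) (fun _ _ => abs_nonneg _)
          (Finset.mem_range.2 (Nat.lt_succ_of_le hj))
      _ ≤ _ := le_add_of_nonneg_right zero_le_one
  rw [hcut_eq_inv_mul_hcut_one hρ.ne', iteratedDeriv_const_mul_field,
    iteratedDeriv_comp_const_mul (hcut_contDiff hχ one_pos j)]
  calc |ρ⁻¹ * (ρ⁻¹ ^ j * iteratedDeriv j (hcut χ 1) (ρ⁻¹ * y))|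
      = |iteratedDeriv j (hcut χ 1) (ρ⁻¹ * y)| / ρ ^ (j + 1) := by
        rw [abs_mul, abs_mul, abs_pow, abs_inv, abs_of_pos hρ, pow_succ, div_eq_mul_inv,
          mul_inv, inv_pow]
        ring
    _ ≤ _ := by gcongr; exact (hB j _).trans hBj

lemma norm_iteratedFDeriv_hcut_comp_le {E : Type*} [NormedAddCommGroup E] [NormedSpace ℝ E]
    (hχ : IsCutoff χ) {N : ℕ} {B ρ M D : ℝ} (hB0 : 0 ≤ B) (hρ : 0 < ρ) (hρM : ρ ≤ M)
    (hB : ∀ j ≤ N, ∀ y, |iteratedDeriv j (hcut χ ρ) y| ≤ B / ρ ^ (j + 1))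
    {f : E → ℝ} (hf : ContDiff ℝ N f) (x : E)
    (hD : ∀ j, 1 ≤ j → j ≤ N → ‖iteratedFDeriv ℝ j f x‖ ≤ M * D ^ j) :
    ‖iteratedFDeriv ℝ N (fun x => hcut χ ρ (f x)) x‖ ≤
      N.factorial * B * M ^ N * D ^ N / ρ ^ (N + 1) := by
  have hM : 0 < M := hρ.trans_le hρM
  set φ : ℝ → ℝ := fun y => hcut χ ρ (M * y)
  set f₁ : E → ℝ := fun x => M⁻¹ * f x
  have hcomp : (fun x => hcut χ ρ (f x)) = φ ∘ f₁ := by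
    funext x
    simp only [φ, f₁, Function.comp_apply, mul_inv_cancel_left₀ hM.ne']
  have hφ : ∀ j ≤ N, ∀ y : ℝ, ‖iteratedFDeriv ℝ j φ y‖ ≤ B * (M / ρ) ^ N / ρ := by
    intro j hj y
    rw [norm_iteratedFDeriv_eq_norm_iteratedDeriv,
      iteratedDeriv_comp_const_mul (hcut_contDiff hχ hρ j), Real.norm_eq_abs, abs_mul,
      abs_pow, abs_of_pos hM]
    calc M ^ j * |iteratedDeriv j (hcut χ ρ) (M * y)| ≤ M ^ j * (B / ρ ^ (j + 1)) := by
          gcongr; exact hB j hj _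
      _ = B * (M / ρ) ^ j / ρ := by rw [div_pow, pow_succ]; field_simp
      _ ≤ B * (M / ρ) ^ N / ρ := by
          gcongr
          exact (one_le_div hρ).2 hρM
  have hf₁ : ∀ j, 1 ≤ j → j ≤ N → ‖iteratedFDeriv ℝ j f₁ x‖ ≤ D ^ j := by
    intro j hj1 hj
    have hfj : ContDiffAt ℝ j f x := (hf.of_le (by exact_mod_cast hj)).contDiffAt
    rw [show f₁ = M⁻¹ • f from rfl, iteratedFDeriv_const_smul_apply hfj, norm_smul,
      Real.norm_eq_abs, abs_inv, abs_of_pos hM, inv_mul_le_iff₀ hM]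
    exact hD j hj1 hj
  rw [hcomp]
  calc ‖iteratedFDeriv ℝ N (φ ∘ f₁) x‖ ≤ N.factorial * (B * (M / ρ) ^ N / ρ) * D ^ N :=
        norm_iteratedFDeriv_comp_le ((hcut_contDiff hχ hρ N).comp (contDiff_const.mul contDiff_id))
          (contDiff_const.mul hf) le_rfl x (fun j hj => hφ j hj _) hf₁
    _ = N.factorial * B * M ^ N * D ^ N / ρ ^ (N + 1) := by
        rw [div_pow, pow_succ]; field_simp

lemma ContinuousMultilinearMap.norm_le_sum_abs_apply_single {ι κ : Type*} [Fintype ι]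
    [DecidableEq ι] [Fintype κ] [DecidableEq κ]
    (m : ContinuousMultilinearMap ℝ (fun _ : κ => ι → ℝ) ℝ) :
    ‖m‖ ≤ ∑ p : κ → ι, |m fun t => Pi.single (p t) 1| := by
  refine m.opNorm_le_bound (by positivity) fun v => ?_
  have hv : v = fun t => ∑ i, v t i • (Pi.single i 1 : ι → ℝ) := by
    funext t s
    simp [Finset.sum_apply, Pi.single_apply]
  have hterm : ∀ p : κ → ι, ‖m fun t => v t (p t) • (Pi.single (p t) 1 : ι → ℝ)‖ ≤
      |m fun t => Pi.single (p t) 1| * ∏ t, ‖v t‖ := by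
    intro p
    rw [m.map_smul_univ, norm_smul, norm_prod, mul_comm, Real.norm_eq_abs]
    gcongr with t
    exact norm_le_pi_norm (v t) (p t)
  calc ‖m v‖ = ‖∑ p : κ → ι, m fun t => v t (p t) • (Pi.single (p t) 1 : ι → ℝ)‖ := by
        rw [← m.map_sum (fun t i => v t i • (Pi.single i 1 : ι → ℝ)), ← hv]
    _ ≤ ∑ p : κ → ι, |m fun t => Pi.single (p t) 1| * ∏ t, ‖v t‖ :=
        (norm_sum_le _ _).trans (Finset.sum_le_sum fun p _ => hterm p)
    _ = _ := by rw [Finset.sum_mul]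

section PartialDerivatives

variable {n : ℕ}

noncomputable def pderivList (L : List (Fin n)) (g : (Fin n → ℝ) → ℝ) : (Fin n → ℝ) → ℝ :=
  L.foldr pderiv' g

lemma contDiff_pderiv' {m : ℕ} (i : Fin n) {g : (Fin n → ℝ) → ℝ} (hg : ContDiff ℝ (m + 1) g) :
    ContDiff ℝ m (pderiv' i g) :=
  (hg.fderiv_right le_rfl).clm_apply contDiff_const

lemma contDiff_pderivList (L : List (Fin n)) {m : ℕ} {g : (Fin n → ℝ) → ℝ}
    (hg : ContDiff ℝ (m + L.length : ℕ) g) : ContDiff ℝ m (pderivList L g) := by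
  induction L generalizing m with
  | nil => exact hg
  | cons i L ih =>
    exact contDiff_pderiv' i (ih (by rwa [List.length_cons, ← add_assoc, add_right_comm] at hg))

lemma pderivList_ofFn_apply {j : ℕ} (p : Fin j → Fin n) {g : (Fin n → ℝ) → ℝ}
    (hg : ContDiff ℝ j g) (x : Fin n → ℝ) :
    pderivList (List.ofFn p) g x = iteratedFDeriv ℝ j g x (fun t => Pi.single (p t) 1) := by
  induction j generalizing x with
  | zero => simp [pderivList]
  | succ j ih =>
    have hdiff : Differentiable ℝ (iteratedFDeriv ℝ j g) :=
      hg.differentiable_iteratedFDeriv (by exact_mod_cast Nat.lt_succ_self j)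
    have htail : pderivList (List.ofFn fun t => p t.succ) g =
        fun y => iteratedFDeriv ℝ j g y (fun t => Pi.single (p t.succ) 1) :=
      funext (ih (fun t => p t.succ) (hg.of_le (by exact_mod_cast Nat.le_succ j)))
    rw [iteratedFDeriv_succ_apply_left, List.ofFn_succ]
    change fderiv ℝ (pderivList (List.ofFn fun t => p t.succ) g) x (Pi.single (p 0) 1) = _
    rw [htail, fderiv_continuousMultilinear_apply_const_apply (hdiff x)]
    rfl

lemma pderiv'_comm (i j : Fin n) {g : (Fin n → ℝ) → ℝ} (hg : ContDiff ℝ 2 g) :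
    pderiv' i (pderiv' j g) = pderiv' j (pderiv' i g) := by
  funext x
  have hsymm : IsSymmSndFDerivAt ℝ g x :=
    hg.contDiffAt.isSymmSndFDerivAt (by simp [minSmoothness_of_isRCLikeNormedField])
  have h : pderivList [i, j] g x = _ := pderivList_ofFn_apply ![i, j] hg x
  have h' : pderivList [j, i] g x = _ := pderivList_ofFn_apply ![j, i] hg x
  change pderivList [i, j] g x = pderivList [j, i] g x
  rw [h, h']
  convert hsymm.iteratedFDeriv_cons using 2 <;>
  · ext t
    fin_cases t <;> rfl

lemma pderivList_perm {L₁ L₂ : List (Fin n)} (hp : L₁.Perm L₂) {g : (Fin n → ℝ) → ℝ}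
    (hg : ContDiff ℝ L₁.length g) : pderivList L₁ g = pderivList L₂ g := by
  induction hp with
  | nil => rfl
  | cons i _ ih =>
    exact congrArg (pderiv' i) (ih (hg.of_le (by exact_mod_cast Nat.le_succ _)))
  | swap i j L =>
    refine pderiv'_comm j i (contDiff_pderivList L ?_)
    convert hg using 2
    simp only [List.length_cons]
    omega
  | trans h₁₂ _ ih₁₂ ih₂₃ => rw [ih₁₂ hg, ih₂₃ (h₁₂.length_eq ▸ hg)]

def multiIndexList (α : Fin n → ℕ) : List (Fin n) :=
  (List.finRange n).flatMap fun i => List.replicate (α i) i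

lemma multiDeriv_eq_pderivList (α : Fin n → ℕ) (g : (Fin n → ℝ) → ℝ) :
    multiDeriv α g = pderivList (multiIndexList α) g := by
  unfold multiDeriv multiIndexList pderivList
  induction List.finRange n with
  | nil => rfl
  | cons i L ih =>
    rw [List.foldr_cons, ih, List.flatMap_cons, List.foldr_append]
    induction α i with
    | zero => rfl
    | succ m ihm => rw [Function.iterate_succ_apply', ihm]; rfl

lemma length_multiIndexList (α : Fin n → ℕ) : (multiIndexList α).length = ∑ i, α i := by
  simp [multiIndexList, List.length_flatMap, Fin.sum_univ_def]

lemma count_multiIndexList (α : Fin n → ℕ) (i : Fin n) : (multiIndexList α).count i = α i := by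
  simp [multiIndexList, List.count_flatMap, List.count_replicate, ← Fin.sum_univ_def,
    Function.comp_def]

lemma perm_multiIndexList_count (L : List (Fin n)) : L.Perm (multiIndexList (L.count ·)) :=
  List.perm_iff_count.2 fun i => (count_multiIndexList (L.count ·) i).symm

lemma sum_count_eq_length (L : List (Fin n)) : ∑ i, L.count i = L.length :=
  ((length_multiIndexList _).symm.trans (perm_multiIndexList_count L).length_eq.symm)

lemma pderivList_eq_multiDeriv (L : List (Fin n)) {g : (Fin n → ℝ) → ℝ}
    (hg : ContDiff ℝ L.length g) : pderivList L g = multiDeriv (L.count ·) g := by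
  rw [multiDeriv_eq_pderivList]
  exact pderivList_perm (perm_multiIndexList_count L) hg

lemma abs_multiDeriv_le_norm_iteratedFDeriv (α : Fin n → ℕ) {g : (Fin n → ℝ) → ℝ}
    (hg : ContDiff ℝ (∑ i, α i : ℕ) g) (x : Fin n → ℝ) :
    |multiDeriv α g x| ≤ ‖iteratedFDeriv ℝ (∑ i, α i) g x‖ := by
  rw [multiDeriv_eq_pderivList, ← length_multiIndexList] at *
  generalize multiIndexList α = L at hg ⊢
  conv_lhs => rw [← List.ofFn_get L, pderivList_ofFn_apply _ hg]
  calc _ ≤ ‖iteratedFDeriv ℝ L.length g x‖ * ∏ t, ‖(Pi.single (L.get t) 1 : Fin n → ℝ)‖ :=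
        (iteratedFDeriv ℝ L.length g x).le_opNorm _
    _ = ‖iteratedFDeriv ℝ L.length g x‖ := by simp [Pi.norm_single]

lemma norm_iteratedFDeriv_le_of_abs_multiDeriv_le {j : ℕ} {g : (Fin n → ℝ) → ℝ}
    (hg : ContDiff ℝ j g) {x : Fin n → ℝ} {A : ℝ}
    (hA : ∀ α : Fin n → ℕ, ∑ i, α i = j → |multiDeriv α g x| ≤ A) :
    ‖iteratedFDeriv ℝ j g x‖ ≤ n ^ j * A := by
  have hdir : ∀ p : Fin j → Fin n, |iteratedFDeriv ℝ j g x fun t => Pi.single (p t) 1| ≤ A := by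
    intro p
    have hp : (List.ofFn p).length = j := List.length_ofFn
    rw [← pderivList_ofFn_apply p hg, pderivList_eq_multiDeriv _ (by rwa [hp])]
    exact hA _ ((sum_count_eq_length _).trans hp)
  calc ‖iteratedFDeriv ℝ j g x‖
      ≤ ∑ p : Fin j → Fin n, |iteratedFDeriv ℝ j g x fun t => Pi.single (p t) 1| :=
        ContinuousMultilinearMap.norm_le_sum_abs_apply_single _
    _ ≤ ∑ _p : Fin j → Fin n, A := Finset.sum_le_sum fun p _ => hdir p
    _ = n ^ j * A := by simp

lemma norm_iteratedFDeriv_le_of_pow_mul_abs_multiDeriv_le {K : ℕ} {f : (Fin n → ℝ) → ℝ}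
    (hf : ContDiff ℝ K f) {γ M : ℝ} (hγ : 0 < γ) {x : Fin n → ℝ}
    (hfM : ∀ α : Fin n → ℕ, 1 ≤ ∑ i, α i → ∑ i, α i ≤ K →
      γ ^ (∑ i, α i) * |multiDeriv α f x| ≤ M)
    {j : ℕ} (hj1 : 1 ≤ j) (hjK : j ≤ K) :
    ‖iteratedFDeriv ℝ j f x‖ ≤ M * (n / γ) ^ j := by
  rw [div_pow, ← mul_div_assoc, mul_comm M, mul_div_assoc]
  refine norm_iteratedFDeriv_le_of_abs_multiDeriv_le (hf.of_le (by exact_mod_cast hjK))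
    fun α hα => ?_
  rw [le_div_iff₀ (by positivity), mul_comm, ← hα]
  exact hfM α (hα ▸ hj1) (hα ▸ hjK)

end PartialDerivatives

/-- Regularized inverse with derivative bounds: (i) h_ρ is C^∞, equals 1/y for
|y| ≥ 2ρ/3, and |h_ρ| ≤ 3/ρ; (ii) if f ∈ C^{k+1}(ℝ^n) satisfies γ^{|α|}|∂^α f| ≤ M for
1 ≤ |α| ≤ k+1, then g = h_ρ ∘ f is C^{k+1}, equals 1/f where |f| ≥ ρ, and
γ^{|α|}|∂^α g| ≤ C_k M^{k+1}/ρ^{k+2} for |α| ≤ k+1, with C_k depending only on k, n, χ. -/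
theorem regularized_inverse (n k : ℕ) (hn : 1 ≤ n) (χ : ℝ → ℝ) (hχ : IsCutoff χ) :
    (∀ ρ : ℝ, 0 < ρ →
      (∀ m : ℕ, ContDiff ℝ m (hcut χ ρ)) ∧
      (∀ y : ℝ, 2 * ρ / 3 ≤ |y| → hcut χ ρ y = 1 / y) ∧
      (∀ y : ℝ, |hcut χ ρ y| ≤ 3 / ρ)) ∧
    ∃ C : ℝ, 0 < C ∧ ∀ γ ρ M : ℝ, 0 < γ → γ ≤ 1 → 0 < ρ → ρ ≤ M →
      ∀ f : (Fin n → ℝ) → ℝ, ContDiff ℝ (k + 1) f →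
        (∀ lam : Fin n → ℝ, ∀ α : Fin n → ℕ, 1 ≤ ∑ i, α i → ∑ i, α i ≤ k + 1 →
          γ ^ (∑ i, α i) * |multiDeriv α f lam| ≤ M) →
        (∀ lam : Fin n → ℝ, ρ ≤ |f lam| → hcut χ ρ (f lam) = 1 / f lam) ∧
        ContDiff ℝ (k + 1) (fun lam => hcut χ ρ (f lam)) ∧
        (∀ lam : Fin n → ℝ, ∀ α : Fin n → ℕ, ∑ i, α i ≤ k + 1 →
          γ ^ (∑ i, α i) * |multiDeriv α (fun x => hcut χ ρ (f x)) lam| ≤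
            C * M ^ (k + 1) / ρ ^ (k + 2)) := by
  refine ⟨fun ρ hρ => ⟨hcut_contDiff hχ hρ, fun y => hcut_eq_one_div hχ hρ, abs_hcut_le hχ hρ⟩, ?_⟩
  obtain ⟨B, hB0, hB⟩ := exists_abs_iteratedDeriv_hcut_le hχ (k + 1)
  refine ⟨(k + 1).factorial * B * n ^ (k + 1), by positivity, ?_⟩
  intro γ ρ M hγ _ hρ hρM f hf hfM
  have hf' : ContDiff ℝ (k + 1 : ℕ) f := mod_cast hf
  refine ⟨fun lam hlam => hcut_eq_one_div hχ hρ (by linarith), ((hcut_contDiff hχ hρ _).comp hf'),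
    fun lam α hα => ?_⟩
  set N := ∑ i, α i
  have hN : ContDiff ℝ N f := hf'.of_le (by exact_mod_cast hα)
  have hD : ∀ j, 1 ≤ j → j ≤ N → ‖iteratedFDeriv ℝ j f lam‖ ≤ M * (n / γ) ^ j :=
    fun j => norm_iteratedFDeriv_le_of_pow_mul_abs_multiDeriv_le hN hγ
      fun β h₁ h₂ => hfM lam β h₁ (h₂.trans hα)
  calc γ ^ N * |multiDeriv α (fun x => hcut χ ρ (f x)) lam|
      ≤ γ ^ N * (N.factorial * B * M ^ N * (n / γ) ^ N / ρ ^ (N + 1)) := by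
        gcongr
        exact (abs_multiDeriv_le_norm_iteratedFDeriv α ((hcut_contDiff hχ hρ _).comp hN) lam).trans
          (norm_iteratedFDeriv_hcut_comp_le hχ hB0.le hρ hρM
            (fun j hj => hB j (hj.trans hα) ρ hρ) hN lam hD)
    _ = N.factorial * B * n ^ N * (M / ρ) ^ N / ρ := by
        rw [div_pow, div_pow, pow_succ]; field_simp
    _ ≤ (k + 1).factorial * B * n ^ (k + 1) * (M / ρ) ^ (k + 1) / ρ := by
        have hn' : (1 : ℝ) ≤ n := mod_cast hn
        have hfac : (N.factorial : ℝ) ≤ (k + 1).factorial := mod_cast Nat.factorial_le hα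
        have hMρ : 1 ≤ M / ρ := (one_le_div hρ).2 hρM
        gcongr
    _ = (k + 1).factorial * B * n ^ (k + 1) * M ^ (k + 1) / ρ ^ (k + 2) := by
        rw [div_pow, pow_succ ρ (k + 1)]; field_simp
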